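/- arXiv:2111.06487 — 7 statements merged into one kernel-verified Lean document; each statement's English description precedes it below -/
import Mathlib

section
/- Let E be a locally convex space, B ⊆ E a set that is not precompact, and {g_n} a sequence in the dual E' converging to 0 in the weak* topology with sup_{x∈B} |g_n(x)| > 1 + δ for every n (where δ > 0). Then there exist a sequence {x_k} in B and a subsequence {f_k} of {g_n} such that |f_k(x_i)| < δ and |f_k(x_k)| > 1 + δ for all i < k. -/
open Filter Topology Pointwise

def IsPrecompactSet {E : Type*} [AddCommGroup E] [TopologicalSpace E] (A : Set E) : Prop :=
  ∀ U ∈ 𝓝 (0 : E), ∃ F : Set E, F.Finite ∧ A ⊆ F + U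

/-- Each `φ (k + 1)` exceeds `φ k` and is so large that `Q (φ (k + 1))` holds at the chosen
witnesses of all indices `≤ φ k`. -/
theorem extraction_forall_lt_of_eventually {X : Type*} {P Q : ℕ → X → Prop}
    (hP : ∀ n, ∃ x, P n x) (hQ : ∀ x, ∀ᶠ n in atTop, Q n x) :
    ∃ x : ℕ → X, ∃ φ : ℕ → ℕ, StrictMono φ ∧ (∀ k, P (φ k) (x k)) ∧
      ∀ i k : ℕ, i < k → Q (φ k) (x i) := by
  choose y hy using hP
  have hnext : ∀ N, ∃ m, N < m ∧ ∀ j ∈ Set.Iic N, Q m (y j) := fun N =>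
    ((eventually_gt_atTop N).and
      ((Set.finite_Iic N).eventually_all.2 fun j _ => hQ (y j))).exists
  choose f hf_gt hf_Q using hnext
  have hφ : StrictMono fun k => f^[k] 0 := strictMono_nat_of_lt_succ fun k => by
    simpa only [Function.iterate_succ_apply'] using hf_gt _
  refine ⟨fun k => y (f^[k] 0), fun k => f^[k] 0, hφ, fun k => hy _, fun i k hik => ?_⟩
  obtain ⟨k, rfl⟩ := Nat.exists_eq_add_of_lt hik
  simp only [Function.iterate_succ_apply']
  exact hf_Q _ _ (hφ.monotone (Nat.le_add_right i k))

theorem stmt1_general {E : Type*} [AddCommGroup E] [Module ℝ E] [TopologicalSpace E]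
    (B : Set E) (δ : ℝ) (hδ : 0 < δ)
    (g : ℕ → E →L[ℝ] ℝ)
    (hnull : ∀ x : E, Tendsto (fun n => g n x) atTop (𝓝 0))
    (hsup : ∀ n, ∃ x ∈ B, 1 + δ < |g n x|) :
    ∃ x : ℕ → E, (∀ k, x k ∈ B) ∧
      ∃ φ : ℕ → ℕ, StrictMono φ ∧
        (∀ k, 1 + δ < |g (φ k) (x k)|) ∧
        ∀ i k : ℕ, i < k → |g (φ k) (x i)| < δ := by
  have hsmall : ∀ x : E, ∀ᶠ n in atTop, |g n x| < δ := fun x =>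
    (hnull x).abs.eventually_lt_const (by simpa using hδ)
  obtain ⟨x, φ, hφ, hlarge, hfar⟩ := extraction_forall_lt_of_eventually hsup hsmall
  exact ⟨x, fun k => (hlarge k).1, φ, hφ, fun k => (hlarge k).2, hfar⟩

/-- If `B` is not precompact in a locally convex space and `{g n}` is a weak* null sequence of
continuous functionals with `sup_{x ∈ B} |g n x| > 1 + δ` for all `n`, then one can extract a
sequence `{x k}` in `B` and a subsequence `{g (φ k)}` with `|g (φ k) (x i)| < δ` for `i < k`
and `|g (φ k) (x k)| > 1 + δ` for all `k`. -/
theorem stmt1 {E : Type*} [AddCommGroup E] [Module ℝ E] [TopologicalSpace E]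
    [IsTopologicalAddGroup E] [ContinuousSMul ℝ E] [LocallyConvexSpace ℝ E]
    (B : Set E) (hB : ¬ IsPrecompactSet B) (δ : ℝ) (hδ : 0 < δ)
    (g : ℕ → E →L[ℝ] ℝ)
    (hnull : ∀ x : E, Tendsto (fun n => g n x) atTop (𝓝 0))
    (hsup : ∀ n, ∃ x ∈ B, 1 + δ < |g n x|) :
    ∃ x : ℕ → E, (∀ k, x k ∈ B) ∧
      ∃ φ : ℕ → ℕ, StrictMono φ ∧
        (∀ k, 1 + δ < |g (φ k) (x k)|) ∧
        ∀ i k : ℕ, i < k → |g (φ k) (x i)| < δ :=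
  stmt1_general B δ hδ g hnull hsup
end

section
/- Let E be a locally convex space, D ⊆ E a set, {x_n} a sequence in D, and {χ_n} a weak* null sequence in E' such that |χ_m(x_n)| < 1/2 for n < m and |χ_m(x_m)| > 3/2 for all m. Then the operator T : E → (𝕂^ω with product topology), T(x) = (χ_n(x))_{n∈ω}, is continuous, takes values in c₀, and the image T({x_n}) satisfies ‖T(x_n) − T(x_m)‖_∞ > 1 for all n < m; in particular T(D) is not totally bounded in the Banach space c₀. -/
/-!
Evaluating at the `m`-th coordinate separates `T (x n)` from `T (x m)` by more than `1` whenever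
`n < m`, since `|χ m (x n)| < 1/2 < 3/2 < |χ m (x m)|`. Finitely many sup-balls of radius `1/2`
cannot cover infinitely many such points: by pigeonhole two of them lie in a common ball, and
then they are at sup-distance at most `1`.
-/

open Filter Topology

lemma lt_abs_sub_of_abs_lt_of_add_lt_abs {a b r d : ℝ} (ha : |a| < r) (hb : r + d < |b|) :
    d < |a - b| := by
  rw [abs_sub_comm]
  linarith [abs_sub_abs_le_abs_sub b a]

lemma not_range_subset_biUnion_of_separated {ι : Type*} {y : ℕ → ι → ℝ} {r : ℝ}
    (hsep : ∀ n m, n < m → ∃ k, r < |y n k - y m k|) (F : Finset (ι → ℝ)) :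
    ¬ Set.range y ⊆ ⋃ f ∈ F, {g | ∀ k, |g k - f k| ≤ r / 2} := by
  intro hcover
  have hcenter : ∀ n, ∃ f ∈ F, ∀ k, |y n k - f k| ≤ r / 2 := fun n => by
    simpa using hcover (Set.mem_range_self n)
  choose f hfF hfy using hcenter
  obtain ⟨n, m, hnm, hf⟩ :=
    Set.Finite.exists_lt_map_eq_of_forall_mem (t := (F : Set (ι → ℝ))) hfF F.finite_toSet
  obtain ⟨k, hk⟩ := hsep n m hnm
  have hn := hfy n k
  have hm := hfy m k
  rw [hf] at hn
  rw [abs_sub_comm] at hm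
  linarith [abs_sub_le (y n k) (f m k) (y m k)]

theorem stmt2_general {E : Type*} [AddCommGroup E] [Module ℝ E] [TopologicalSpace E]
    (D : Set E) (x : ℕ → E) (hxD : ∀ n, x n ∈ D)
    (χ : ℕ → E →L[ℝ] ℝ)
    (hnull : ∀ v : E, Tendsto (fun n => χ n v) atTop (𝓝 0))
    (hsmall : ∀ n m : ℕ, n < m → |χ m (x n)| < 1 / 2)
    (hbig : ∀ m : ℕ, 3 / 2 < |χ m (x m)|) :
    Continuous (fun v : E => (fun n => χ n v : ℕ → ℝ)) ∧
    (∀ v : E, Tendsto (fun n => χ n v) atTop (𝓝 0)) ∧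
    (∀ n m : ℕ, n < m → ∃ k : ℕ, 1 < |χ k (x n) - χ k (x m)|) ∧
    ∀ F : Finset (ℕ → ℝ),
      ¬ ((fun v : E => (fun n => χ n v : ℕ → ℝ)) '' D ⊆
          ⋃ f ∈ F, {g : ℕ → ℝ | ∀ k, |g k - f k| ≤ 1 / 2}) := by
  have hsep : ∀ n m : ℕ, n < m → ∃ k : ℕ, 1 < |χ k (x n) - χ k (x m)| := fun n m hnm =>
    ⟨m, lt_abs_sub_of_abs_lt_of_add_lt_abs (hsmall n m hnm) (by linarith [hbig m])⟩
  refine ⟨continuous_pi fun n => (χ n).continuous, hnull, hsep, fun F hcover => ?_⟩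
  have hrange : Set.range (fun n k => χ k (x n)) ⊆ (fun v : E => (fun k => χ k v)) '' D := by
    rintro _ ⟨n, rfl⟩
    exact ⟨x n, hxD n, rfl⟩
  exact not_range_subset_biUnion_of_separated hsep F (hrange.trans hcover)

/-- Given a set `D` in a locally convex space, a sequence `{x n}` in `D` and a weak* null
sequence `{χ n}` of functionals with `|χ m (x n)| < 1/2` for `n < m` and `|χ m (x m)| > 3/2`,
the operator `T : E → 𝕂^ω`, `T x = (χ n x)_n`, is continuous, takes values in `c₀`, satisfies
`‖T (x n) - T (x m)‖_∞ > 1` for `n < m`, and `T '' D` is not totally bounded in the sup metric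
(no finite `1/2`-net). -/
theorem stmt2 {E : Type*} [AddCommGroup E] [Module ℝ E] [TopologicalSpace E]
    [IsTopologicalAddGroup E] [ContinuousSMul ℝ E] [LocallyConvexSpace ℝ E]
    (D : Set E) (x : ℕ → E) (hxD : ∀ n, x n ∈ D)
    (χ : ℕ → E →L[ℝ] ℝ)
    (hnull : ∀ v : E, Tendsto (fun n => χ n v) atTop (𝓝 0))
    (hsmall : ∀ n m : ℕ, n < m → |χ m (x n)| < 1 / 2)
    (hbig : ∀ m : ℕ, 3 / 2 < |χ m (x m)|) :
    Continuous (fun v : E => (fun n => χ n v : ℕ → ℝ)) ∧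
    (∀ v : E, Tendsto (fun n => χ n v) atTop (𝓝 0)) ∧
    (∀ n m : ℕ, n < m → ∃ k : ℕ, 1 < |χ k (x n) - χ k (x m)|) ∧
    ∀ F : Finset (ℕ → ℝ),
      ¬ ((fun v : E => (fun n => χ n v : ℕ → ℝ)) '' D ⊆
          ⋃ f ∈ F, {g : ℕ → ℝ | ∀ k, |g k - f k| ≤ 1 / 2}) :=
  stmt2_general D x hxD χ hnull hsmall hbig
end

section
/- Every continuous linear operator T from a barrelled locally convex space L into the space C_p⁰(ω) (the space of null sequences c₀ equipped with the topology of pointwise convergence) remains continuous as an operator from L into the Banach space c₀ (with the sup norm). -/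
/-!
The seminorm `v ↦ ‖T v‖ = ⨆ n, |T v n|` is a supremum of continuous functions on `L`, hence lower
semicontinuous. The closed balls of a lower semicontinuous seminorm are barrels, so in a barrelled
space such a seminorm is continuous, and a linear map into a normed space is continuous as soon as
its norm is.
-/

open Filter Topology Pointwise ZeroAtInfty

theorem ZeroAtInftyContinuousMap.norm_eq_iSup_norm {α β : Type*} [TopologicalSpace α]
    [SeminormedAddCommGroup β] (f : C₀(α, β)) : ‖f‖ = ⨆ x, ‖f x‖ :=
  f.toBCF.norm_eq_iSup_norm

theorem ZeroAtInftyContinuousMap.lowerSemicontinuous_norm_comp {L α β : Type*}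
    [TopologicalSpace L] [TopologicalSpace α] [SeminormedAddCommGroup β] {T : L → C₀(α, β)}
    (hT : ∀ x, Continuous fun v => T v x) : LowerSemicontinuous fun v => ‖T v‖ := by
  simp_rw [ZeroAtInftyContinuousMap.norm_eq_iSup_norm]
  exact lowerSemicontinuous_ciSup (fun v => (T v).toBCF.bddAbove_range_norm_comp)
    fun x => ((hT x).norm).lowerSemicontinuous

theorem BarrelledSpace.of_barrel_mem_nhds {L : Type*} [AddCommGroup L] [Module ℝ L]
    [TopologicalSpace L] [IsTopologicalAddGroup L]
    (hbarrelled : ∀ B : Set L,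
      IsClosed B → Balanced ℝ B → Convex ℝ B → Absorbent ℝ B → B ∈ 𝓝 (0 : L)) :
    BarrelledSpace ℝ L where
  continuous_of_lowerSemicontinuous p hp := by
    refine Seminorm.continuous_of_forall' fun r hr => hbarrelled _ ?_
      (p.balanced_closedBall_zero r) (p.convex_closedBall 0 r) (p.absorbent_closedBall_zero hr)
    rw [p.closedBall_zero_eq]
    exact hp.isClosed_preimage r

theorem stmt6_general {L : Type*} [AddCommGroup L] [Module ℝ L] [TopologicalSpace L]
    [IsTopologicalAddGroup L]
    (hbarrelled : ∀ B : Set L,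
      IsClosed B → Balanced ℝ B → Convex ℝ B → Absorbent ℝ B → B ∈ 𝓝 (0 : L))
    (T : L →ₗ[ℝ] C₀(ℕ, ℝ))
    (hTp : ∀ n : ℕ, Continuous fun v : L => T v n) :
    Continuous fun v : L => T v := by
  have := BarrelledSpace.of_barrel_mem_nhds hbarrelled
  have hnorm : Continuous ((normSeminorm ℝ C₀(ℕ, ℝ)).comp T) :=
    Seminorm.continuous_of_lowerSemicontinuous _
      (ZeroAtInftyContinuousMap.lowerSemicontinuous_norm_comp hTp)
  exact (norm_withSeminorms ℝ C₀(ℕ, ℝ)).continuous_of_continuous_comp T fun _ => hnorm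

/-- Every continuous linear operator from a barrelled locally convex space `L` into
`C_p⁰(ω)` (the space `c₀` of null sequences with the topology of pointwise convergence)
remains continuous into the Banach space `c₀` (with the sup norm, modelled as `C₀(ℕ, ℝ)`). -/
theorem stmt6 {L : Type*} [AddCommGroup L] [Module ℝ L] [TopologicalSpace L]
    [IsTopologicalAddGroup L] [ContinuousSMul ℝ L]
    (hbarrelled : ∀ B : Set L,
      IsClosed B → Balanced ℝ B → Convex ℝ B → Absorbent ℝ B → B ∈ 𝓝 (0 : L))
    (T : L →ₗ[ℝ] C₀(ℕ, ℝ))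
    (hTp : ∀ n : ℕ, Continuous fun v : L => T v n) :
    Continuous fun v : L => T v :=
  stmt6_general hbarrelled T hTp
end

section
/- If a topological vector space X is selectively sequentially precompact at a subset S, then S is a bounded subset of X. -/
/-! If `S` is unbounded, some closed neighbourhood `C` of zero fails to absorb it, so there are
scalars `a n → ∞` and points of `S` outside `a n • C`. The open sets `(a n • C)ᶜ` meet `S`, yet a
sequence chosen from them has no Cauchy subsequence: Cauchy sequences are totally bounded, hence
bounded, so `C` would absorb the subsequence and eventually contain it in `a (φ n) • C`. -/

open Filter Topology Pointwise

/-- A sequence in a topological vector space is *Cauchy* if for every neighborhood `U` of zero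
there is `N` such that `y m - y k ∈ U` for all `m, k ≥ N`. -/
def IsCauchySeqTVS {X : Type*} [AddCommGroup X] [TopologicalSpace X] (y : ℕ → X) : Prop :=
  ∀ U ∈ 𝓝 (0 : X), ∃ N : ℕ, ∀ m ≥ N, ∀ k ≥ N, y m - y k ∈ U

open Bornology Set

section

variable {X : Type*}

theorem IsCauchySeqTVS.cauchySeq [AddCommGroup X] [UniformSpace X] [IsUniformAddGroup X]
    {y : ℕ → X} (hy : IsCauchySeqTVS y) : CauchySeq y := by
  rw [cauchySeq_iff]
  intro W hW
  rw [uniformity_eq_comap_nhds_zero X] at hW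
  obtain ⟨T, hT, hTW⟩ := hW
  obtain ⟨N, hN⟩ := hy T hT
  exact ⟨N, fun k hk l hl => hTW (hN l hl k hk)⟩

theorem IsCauchySeqTVS.isVonNBounded_range (𝕜 : Type*) [NormedField 𝕜] [AddCommGroup X]
    [Module 𝕜 X] [TopologicalSpace X] [IsTopologicalAddGroup X] [ContinuousSMul 𝕜 X]
    {y : ℕ → X} (hy : IsCauchySeqTVS y) : IsVonNBounded 𝕜 (range y) :=
  letI := IsTopologicalAddGroup.rightUniformSpace X
  haveI := isUniformAddGroup_of_addCommGroup (G := X)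
  hy.cauchySeq.totallyBounded_range.isVonNBounded 𝕜

theorem exists_isClosed_nhds_not_absorbs {𝕜 : Type*} [SeminormedRing 𝕜] [AddCommGroup X]
    [SMul 𝕜 X] [TopologicalSpace X] [IsTopologicalAddGroup X] {S : Set X}
    (hS : ¬ IsVonNBounded 𝕜 S) : ∃ C ∈ 𝓝 (0 : X), IsClosed C ∧ ¬ Absorbs 𝕜 C S := by
  simpa [(closed_nhds_basis (0 : X)).isVonNBounded_iff, and_assoc] using hS

theorem exists_seq_tendsto_cobounded_not_subset_smul {𝕜 : Type*} [NormedDivisionRing 𝕜]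
    [SMul 𝕜 X] {C S : Set X} (h : ¬ Absorbs 𝕜 C S) :
    ∃ a : ℕ → 𝕜, Tendsto a atTop (cobounded 𝕜) ∧ ∀ n, a n ≠ 0 ∧ ¬ S ⊆ a n • C := by
  have : (cobounded 𝕜).IsCountablyGenerated := comap_norm_atTop (E := 𝕜) ▸ inferInstance
  have : ∃ᶠ c in cobounded 𝕜, c ≠ 0 ∧ ¬ S ⊆ c • C :=
    ((not_eventually.mp h).and_eventually (eventually_ne_cobounded 0)).mono
      fun _ hc => ⟨hc.2, hc.1⟩
  exact exists_seq_forall_of_frequently this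

end

/-- If a topological vector space `X` is selectively sequentially precompact at `S` (for any
open sets `U n` meeting `S` there are points `x n ∈ U n` with a Cauchy subsequence), then `S`
is bounded in `X`. -/
theorem stmt8 {X : Type*} [AddCommGroup X] [Module ℝ X] [TopologicalSpace X]
    [IsTopologicalAddGroup X] [ContinuousSMul ℝ X] (S : Set X)
    (hS : ∀ U : ℕ → Set X, (∀ n, IsOpen (U n)) → (∀ n, (U n ∩ S).Nonempty) →
      ∃ x : ℕ → X, (∀ n, x n ∈ U n) ∧
        ∃ φ : ℕ → ℕ, StrictMono φ ∧ IsCauchySeqTVS (x ∘ φ)) :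
    Bornology.IsVonNBounded ℝ S := by
  by_contra hB
  obtain ⟨C, hC0, hCc, hCS⟩ := exists_isClosed_nhds_not_absorbs hB
  obtain ⟨a, ha, haC⟩ := exists_seq_tendsto_cobounded_not_subset_smul hCS
  obtain ⟨x, hxC, φ, hφ, hxφ⟩ := hS (fun n => (a n • C)ᶜ)
    (fun n => (hCc.smul_of_ne_zero (haC n).1).isOpen_compl)
    (fun n => by rw [inter_comm, ← sdiff_eq, sdiff_nonempty]; exact (haC n).2)
  obtain ⟨n, hn⟩ := ((ha.comp hφ.tendsto_atTop).eventually
    (hxφ.isVonNBounded_range ℝ hC0)).exists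
  exact hxC (φ n) (hn ⟨n, rfl⟩)
end

section
/- Every separable barrelled locally convex space E is Gelfand–Phillips: every limited subset of E is precompact. -/
/-!
Fix a closed absolutely convex neighbourhood `W ⊆ U` of zero and its polar `P`. If elements of
`P` that are close on longer and longer initial pieces of a dense sequence were not uniformly
close on `A`, their differences would form a sequence that is bounded on `W` (so equicontinuous)
and tends to zero on a dense set, hence is weak* null; limitedness of `A` forbids this. Hence `P`
is totally bounded for uniform convergence on `A`. As `A` is bounded, `P` is uniformly bounded on
`A`, and the roles can be swapped: `A` is totally bounded for uniform convergence on `P`, which by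
Hahn–Banach controls membership in `W`.
-/

open Filter Topology Pointwise

/-- A set `A` is *limited* if every weak* null sequence of continuous functionals converges to
`0` uniformly on `A`. -/
def LimitedSet {E : Type*} [AddCommGroup E] [Module ℝ E] [TopologicalSpace E]
    (A : Set E) : Prop :=
  ∀ χ : ℕ → E →L[ℝ] ℝ, (∀ x : E, Tendsto (fun n => χ n x) atTop (𝓝 0)) →
    ∀ ε : ℝ, 0 < ε → ∀ᶠ n in atTop, ∀ a ∈ A, |χ n a| ≤ ε

section FiniteNets

variable {X Y ι : Type*}

lemma exists_finite_subset_forall_dist_lt [Fintype ι] (g : Y → ι → ℝ) {S : Set Y} {C : ℝ}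
    (hC : ∀ y ∈ S, ∀ i, ‖g y i‖ ≤ C) {δ : ℝ} (hδ : 0 < δ) :
    ∃ T ⊆ S, T.Finite ∧ ∀ y ∈ S, ∃ t ∈ T, ∀ i, dist (g y i) (g t i) < δ := by
  have hbdd : TotallyBounded (g '' S) := by
    refine (isCompact_closedBall (0 : ι → ℝ) (max C 0)).totallyBounded.subset ?_
    rintro _ ⟨y, hy, rfl⟩
    rw [mem_closedBall_zero_iff, pi_norm_le_iff_of_nonneg (le_max_right C 0)]
    exact fun i => (hC y hy i).trans (le_max_left C 0)
  obtain ⟨T, hTS, hTfin, hcover⟩ :=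
    Set.exists_subset_image_finite_and.1 (Metric.finite_approx_of_totallyBounded hbdd δ hδ)
  refine ⟨T, hTS, hTfin, fun y hy => ?_⟩
  obtain ⟨_, ⟨t, ht, rfl⟩, hyt⟩ := Set.mem_iUnion₂.1 (hcover ⟨y, hy, rfl⟩)
  exact ⟨t, ht, (dist_pi_lt_iff hδ).1 hyt⟩

lemma exists_finite_net_of_finite_dual_net (K : X → Y → ℝ) {A : Set X} {P T : Set Y} {C : ℝ}
    (hC : ∀ x ∈ A, ∀ y ∈ P, ‖K x y‖ ≤ C) (hTP : T ⊆ P) (hT : T.Finite) {ε : ℝ} (hε : 0 < ε)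
    (hnet : ∀ y ∈ P, ∃ t ∈ T, ∀ x ∈ A, dist (K x y) (K x t) ≤ ε) :
    ∃ F ⊆ A, F.Finite ∧ ∀ x ∈ A, ∃ f ∈ F, ∀ y ∈ P, dist (K x y) (K f y) < 3 * ε := by
  have := hT.fintype
  obtain ⟨F, hFA, hF, hFnet⟩ := exists_finite_subset_forall_dist_lt (fun x (t : T) => K x t)
    (fun x hx t => hC x hx t (hTP t.2)) hε
  refine ⟨F, hFA, hF, fun x hx => ?_⟩
  obtain ⟨f, hf, hxf⟩ := hFnet x hx
  refine ⟨f, hf, fun y hy => ?_⟩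
  obtain ⟨t, ht, hyt⟩ := hnet y hy
  calc dist (K x y) (K f y)
      ≤ dist (K x y) (K x t) + dist (K x t) (K f t) + dist (K f t) (K f y) :=
        dist_triangle4 _ _ _ _
    _ < 3 * ε := by
        linarith [hyt x hx, hxf ⟨t, ht⟩, dist_comm (K f t) (K f y), hyt f (hFA hf)]

end FiniteNets

lemma Equicontinuous.tendsto_of_denseRange {α X κ ι : Type*} [TopologicalSpace X]
    [UniformSpace α] {l : Filter ι} {F : ι → X → α} {f : X → α} (hF : Equicontinuous F)
    (hf : Continuous f) {u : κ → X} (hu : DenseRange u)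
    (h : ∀ k, Tendsto (F · (u k)) l (𝓝 (f (u k)))) (x : X) :
    Tendsto (F · x) l (𝓝 (f x)) :=
  (hF.isClosed_setOfPred_tendsto hf).closure_subset_iff.2 (Set.range_subset_iff.2 h) (hu x)

section Polar

variable {E : Type*} [AddCommGroup E] [Module ℝ E] [TopologicalSpace E] {W : Set E}

lemma Bornology.IsVonNBounded.exists_norm_le_of_mem_polar {A : Set E}
    (hA : IsVonNBounded ℝ A) (hW : W ∈ 𝓝 0) :
    ∃ C, ∀ χ ∈ StrongDual.polar ℝ W, ∀ a ∈ A, ‖χ a‖ ≤ C := by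
  obtain ⟨r, hr, hrA⟩ := (hA hW).exists_pos
  refine ⟨r, fun χ hχ a ha => ?_⟩
  obtain ⟨w, hw, rfl⟩ := hrA r (by rw [Real.norm_of_nonneg hr.le]) ha
  rw [map_smul, norm_smul, Real.norm_of_nonneg hr.le]
  exact mul_le_of_le_one_right hr.le (hχ w hw)

variable [IsTopologicalAddGroup E] [ContinuousSMul ℝ E]

lemma mem_of_forall_mem_polar_norm_le_one [LocallyConvexSpace ℝ E] (hWc : IsClosed W)
    (hWa : AbsConvex ℝ W) (h₀ : (0 : E) ∈ W) {x : E}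
    (hx : ∀ χ ∈ StrongDual.polar ℝ W, ‖χ x‖ ≤ 1) : x ∈ W := by
  by_contra hxW
  obtain ⟨f, u, hfW, hfx⟩ := geometric_hahn_banach_closed_point hWa.2 hWc hxW
  have hu : 0 < u := by simpa using hfW 0 h₀
  have hnorm (y : E) : ‖(u⁻¹ • f) y‖ ≤ 1 ↔ |f y| ≤ u := by
    rw [smul_apply, smul_eq_mul, norm_mul, Real.norm_of_nonneg
      (inv_nonneg.2 hu.le), Real.norm_eq_abs, inv_mul_le_iff₀ hu, mul_one]
  have hpolar : u⁻¹ • f ∈ StrongDual.polar ℝ W := (StrongDual.mem_polar_iff ℝ W).2 fun w hw => by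
    have hneg := hfW (-w) (hWa.1.neg_mem_iff.2 hw)
    rw [map_neg] at hneg
    exact (hnorm w).2 (abs_le.2 ⟨by linarith, (hfW w hw).le⟩)
  linarith [(hnorm x).1 (hx _ hpolar), le_abs_self (f x)]

lemma equicontinuous_of_forall_norm_le {ι : Type*} (η : ι → StrongDual ℝ E) (hW : W ∈ 𝓝 0)
    {C : ℝ} (hC : ∀ i, ∀ x ∈ W, ‖η i x‖ ≤ C) : Equicontinuous fun i => ⇑(η i) := by
  refine equicontinuous_of_equicontinuousAt_zero η (Metric.equicontinuousAt_iff_right.2 ?_)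
  intro ε hε
  have hr : 0 < ε / (|C| + 1) := by positivity
  filter_upwards [(set_smul_mem_nhds_zero_iff hr.ne').2 hW]
  rintro _ ⟨w, hw, rfl⟩ i
  rw [Function.comp_apply, map_zero, dist_zero_left, map_smul, norm_smul,
    Real.norm_of_nonneg hr.le]
  calc ε / (|C| + 1) * ‖η i w‖ ≤ ε / (|C| + 1) * |C| := by
        gcongr
        exact (hC i w hw).trans (le_abs_self C)
    _ < ε := by
        rw [div_mul_eq_mul_div, div_lt_iff₀ (by positivity)]
        linarith

lemma LimitedSet.exists_finset_dist_le_of_mem_polar [TopologicalSpace.SeparableSpace E]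
    {A : Set E} (hA : LimitedSet A) (hW : W ∈ 𝓝 0) {ε : ℝ} (hε : 0 < ε) :
    ∃ D : Finset E, ∃ δ > 0, ∀ χ ∈ StrongDual.polar ℝ W, ∀ ψ ∈ StrongDual.polar ℝ W,
      (∀ d ∈ D, dist (χ d) (ψ d) < δ) → ∀ a ∈ A, dist (χ a) (ψ a) ≤ ε := by
  classical
  by_contra! h
  have : Nonempty E := ⟨0⟩
  set u := TopologicalSpace.denseSeq E
  choose χ hχ ψ hψ hclose a ha hfar using fun n : ℕ =>
    h ((Finset.range (n + 1)).image u) (1 / (n + 1)) Nat.one_div_pos_of_nat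
  set η : ℕ → StrongDual ℝ E := fun n => χ n - ψ n
  have hηW (n : ℕ) (x : E) (hx : x ∈ W) : ‖η n x‖ ≤ 2 :=
    calc ‖χ n x - ψ n x‖ ≤ ‖χ n x‖ + ‖ψ n x‖ := norm_sub_le _ _
      _ ≤ 1 + 1 := add_le_add (hχ n x hx) (hψ n x hx)
      _ = 2 := one_add_one_eq_two
  have hηu (k : ℕ) : Tendsto (fun n => η n (u k)) atTop (𝓝 0) := by
    refine squeeze_zero_norm' ?_ tendsto_one_div_add_atTop_nhds_zero_nat
    filter_upwards [eventually_ge_atTop k] with n hn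
    change ‖χ n (u k) - ψ n (u k)‖ ≤ _
    rw [← dist_eq_norm]
    exact (hclose n (u k) <|
      Finset.mem_image_of_mem u (Finset.mem_range.2 (Nat.lt_succ_of_le hn))).le
  have hnull : ∀ x, Tendsto (fun n => η n x) atTop (𝓝 0) :=
    (equicontinuous_of_forall_norm_le η hW hηW).tendsto_of_denseRange continuous_const
      (TopologicalSpace.denseRange_denseSeq E) hηu
  obtain ⟨n, hn⟩ := (hA η hnull ε hε).exists
  exact (hfar n).not_ge (Real.dist_eq _ _ ▸ hn (a n) (ha n))

lemma LimitedSet.exists_finite_net_polar [TopologicalSpace.SeparableSpace E] {A : Set E}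
    (hA : LimitedSet A) (hW : W ∈ 𝓝 0) {ε : ℝ} (hε : 0 < ε) :
    ∃ T ⊆ StrongDual.polar ℝ W, T.Finite ∧
      ∀ χ ∈ StrongDual.polar ℝ W, ∃ t ∈ T, ∀ a ∈ A, dist (χ a) (t a) ≤ ε := by
  obtain ⟨D, δ, hδ, hDA⟩ := hA.exists_finset_dist_le_of_mem_polar hW hε
  obtain ⟨C, hC⟩ := D.finite_toSet.isVonNBounded.exists_norm_le_of_mem_polar hW
  obtain ⟨T, hTP, hT, hTnet⟩ := exists_finite_subset_forall_dist_lt (fun χ (d : D) => χ d)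
    (fun χ hχ d => hC χ hχ d d.2) hδ
  refine ⟨T, hTP, hT, fun χ hχ => ?_⟩
  obtain ⟨t, ht, hχt⟩ := hTnet χ hχ
  exact ⟨t, ht, hDA χ hχ t (hTP ht) fun d hd => hχt ⟨d, hd⟩⟩

end Polar

theorem stmt10_general {E : Type*} [AddCommGroup E] [Module ℝ E] [TopologicalSpace E]
    [IsTopologicalAddGroup E] [ContinuousSMul ℝ E] [LocallyConvexSpace ℝ E]
    [TopologicalSpace.SeparableSpace E]
    (A : Set E) (hAbdd : Bornology.IsVonNBounded ℝ A) (hA : LimitedSet A) :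
    ∀ U ∈ 𝓝 (0 : E), ∃ F : Set E, F.Finite ∧ A ⊆ F + U := by
  intro U hU
  obtain ⟨W, ⟨hW, hWc, hWa⟩, hWU⟩ := (nhds_hasBasis_absConvex_closed ℝ E).mem_iff.1 hU
  obtain ⟨T, hTP, hT, hTnet⟩ := hA.exists_finite_net_polar hW (ε := 1 / 4) (by norm_num)
  obtain ⟨C, hC⟩ := hAbdd.exists_norm_le_of_mem_polar hW
  obtain ⟨F, hFA, hF, hFnet⟩ := exists_finite_net_of_finite_dual_net (fun x χ => χ x)
    (fun x hx χ hχ => hC χ hχ x hx) hTP hT (by norm_num) hTnet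
  refine ⟨F, hF, fun x hx => ?_⟩
  obtain ⟨f, hf, hxf⟩ := hFnet x hx
  have hxfW : x - f ∈ W := mem_of_forall_mem_polar_norm_le_one hWc hWa (mem_of_mem_nhds hW)
    fun χ hχ => by
      rw [map_sub, ← dist_eq_norm]
      linarith [hxf χ hχ]
  exact ⟨f, hf, x - f, hWU hxfW, add_sub_cancel f x⟩

/-- Every separable barrelled locally convex space is Gelfand–Phillips: every (bounded)
limited subset is precompact. -/
theorem stmt10 {E : Type*} [AddCommGroup E] [Module ℝ E] [TopologicalSpace E]
    [IsTopologicalAddGroup E] [ContinuousSMul ℝ E] [LocallyConvexSpace ℝ E]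
    [TopologicalSpace.SeparableSpace E]
    (hbarrelled : ∀ B : Set E,
      IsClosed B → Balanced ℝ B → Convex ℝ B → Absorbent ℝ B → B ∈ 𝓝 (0 : E))
    (A : Set E) (hAbdd : Bornology.IsVonNBounded ℝ A) (hA : LimitedSet A) :
    ∀ U ∈ 𝓝 (0 : E), ∃ F : Set E, F.Finite ∧ A ⊆ F + U :=
  stmt10_general A hAbdd hA
end

section
/- For every selectively sequentially pseudocompact compact Hausdorff space K, the Banach space C(K) (with the sup norm) has the Gelfand–Phillips property: every limited subset of C(K) is relatively norm compact. -/
/-!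
A limited set is bounded: every functional is bounded on it, so Banach–Steinhaus applies to its
image in the bidual. On `C(K)`, if `z k → q` then `δ_{z k} - δ_q` is weak* null, so a limited set
converges uniformly along `z`. If a limited set `A` were not equicontinuous at `p`, shrinking
neighbourhoods of `p` would give `f n ∈ A` and open sets `U n` such that `f n` differs by more
than `ε` between any point of `U n` and any point of a later `U m`; points `z n ∈ U n` with a
convergent subsequence, which selective sequential pseudocompactness provides, contradict the
uniform convergence. Arzelà–Ascoli concludes.
-/

open Filter Topology

/-- A set `A` in a normed space `E` is *limited* if every weak* null sequence in `E'`
converges to `0` uniformly on `A`. -/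
def LimitedSetB {E : Type*} [NormedAddCommGroup E] [NormedSpace ℝ E] (A : Set E) : Prop :=
  ∀ χ : ℕ → E →L[ℝ] ℝ, (∀ x : E, Tendsto (fun n => χ n x) atTop (𝓝 0)) →
    ∀ ε : ℝ, 0 < ε → ∀ᶠ n in atTop, ∀ a ∈ A, |χ n a| ≤ ε

section Bounded

variable {E : Type*} [NormedAddCommGroup E] [NormedSpace ℝ E] {A : Set E}

lemma LimitedSetB.exists_forall_abs_le (hA : LimitedSetB A) (φ : E →L[ℝ] ℝ) :
    ∃ C, ∀ a ∈ A, |φ a| ≤ C := by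
  have hnull (x : E) : Tendsto (fun n : ℕ => (((n : ℝ) + 1)⁻¹ • φ) x) atTop (𝓝 0) := by
    simpa using tendsto_one_div_add_atTop_nhds_zero_nat.mul_const (φ x)
  obtain ⟨N, hN⟩ := (hA _ hnull 1 one_pos).exists
  refine ⟨N + 1, fun a ha => ?_⟩
  have hpos : (0 : ℝ) < N + 1 := by positivity
  have := hN a ha
  rwa [smul_apply, smul_eq_mul, abs_mul, abs_of_pos (inv_pos.2 hpos),
    inv_mul_le_iff₀ hpos, mul_one] at this

lemma LimitedSetB.isBounded (hA : LimitedSetB A) : Bornology.IsBounded A := by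
  obtain ⟨C, hC⟩ := banach_steinhaus (g := fun a : A => NormedSpace.inclusionInDoubleDual ℝ E a)
    fun φ => (hA.exists_forall_abs_le φ).imp fun C hC a => hC a a.2
  refine isBounded_iff_forall_norm_le.2 ⟨C, fun a ha => ?_⟩
  rw [← (NormedSpace.inclusionInDoubleDualLi ℝ).norm_map a]
  exact hC ⟨a, ha⟩

end Bounded

def IsSelectivelySeqPseudocompact (K : Type*) [TopologicalSpace K] : Prop :=
  ∀ U : ℕ → Set K, (∀ n, IsOpen (U n)) → (∀ n, (U n).Nonempty) →
    ∃ x : ℕ → K, (∀ n, x n ∈ U n) ∧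
      ∃ φ : ℕ → ℕ, StrictMono φ ∧ ∃ p : K, Tendsto (x ∘ φ) atTop (𝓝 p)

section ContinuousMap

variable {K : Type*} [TopologicalSpace K]

lemma LimitedSetB.eventually_abs_sub_le_of_tendsto [CompactSpace K] {A : Set C(K, ℝ)}
    (hA : LimitedSetB A) {z : ℕ → K} {q : K} (hz : Tendsto z atTop (𝓝 q)) {ε : ℝ} (hε : 0 < ε) :
    ∀ᶠ k in atTop, ∀ f ∈ A, |f (z k) - f q| ≤ ε :=
  hA (fun k => ContinuousMap.evalCLM ℝ (z k) - ContinuousMap.evalCLM ℝ q)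
    (fun f => by simpa using ((f.continuous.tendsto q).comp hz).sub_const (f q)) ε hε

lemma ContinuousMap.exists_lt_dist_of_not_equicontinuousAt {α : Type*} [PseudoMetricSpace α]
    {A : Set C(K, α)} {p : K} (h : ¬ EquicontinuousAt ((↑) : A → K → α) p) :
    ∃ ε > 0, ∃ (f : ℕ → C(K, α)) (U : ℕ → Set K), (∀ n, f n ∈ A) ∧ (∀ n, IsOpen (U n)) ∧
      (∀ n, (U n).Nonempty) ∧ ∀ n m, n < m → ∀ y ∈ U n, ∀ y' ∈ U m, ε < dist (f n y) (f n y') := by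
  rw [Metric.equicontinuousAt_iff_right] at h
  push Not at h
  obtain ⟨ε, hε, hbad⟩ := h
  let T := {O : Set K // IsOpen O ∧ p ∈ O}
  have hT (O : T) : ∃ f ∈ A, ∃ x ∈ O.1, ε ≤ dist (f p) (f x) := by
    obtain ⟨x, hx, ⟨f, hf⟩, hd⟩ := frequently_iff.1 hbad (O.2.1.mem_nhds O.2.2)
    exact ⟨f, hf, x, hx, hd⟩
  choose F hFA X hX hFX using hT
  let shrink (O : T) : T := ⟨O.1 ∩ {y | dist (F O p) (F O y) < ε / 4},
    O.2.1.inter (isOpen_lt (continuous_const.dist (F O).continuous) continuous_const),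
    O.2.2, by simpa using by positivity⟩
  let C (n : ℕ) : T := shrink^[n] ⟨Set.univ, isOpen_univ, Set.mem_univ p⟩
  have hC_succ (n : ℕ) : C (n + 1) = shrink (C n) := Function.iterate_succ_apply' _ _ _
  have hC_anti : Antitone fun n => (C n).1 := antitone_nat_of_succ_le fun n => by
    rw [hC_succ]; exact Set.inter_subset_left
  refine ⟨ε / 4, by positivity, fun n => F (C n),
    fun n => (C n).1 ∩ {y | ε / 2 < dist (F (C n) p) (F (C n) y)}, fun n => hFA _,
    fun n => (C n).2.1.inter (isOpen_lt continuous_const (continuous_const.dist (F _).continuous)),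
    fun n => ⟨X (C n), hX _, (half_lt_self hε).trans_le (hFX _)⟩, ?_⟩
  rintro n m hnm y ⟨-, hy : ε / 2 < _⟩ y' ⟨hy', -⟩
  show ε / 4 < dist (F (C n) y) (F (C n) y')
  have hy'_near : dist (F (C n) p) (F (C n) y') < ε / 4 := by
    have : y' ∈ (C (n + 1)).1 := hC_anti hnm hy'
    rw [hC_succ] at this
    exact this.2
  linarith [dist_triangle_right (F (C n) p) (F (C n) y) (F (C n) y')]

lemma LimitedSetB.equicontinuous [CompactSpace K] (hK : IsSelectivelySeqPseudocompact K)
    {A : Set C(K, ℝ)} (hA : LimitedSetB A) : Equicontinuous ((↑) : A → K → ℝ) := by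
  intro p
  by_contra h
  obtain ⟨ε, hε, f, U, hfA, hU_open, hU_ne, hsep⟩ :=
    ContinuousMap.exists_lt_dist_of_not_equicontinuousAt h
  obtain ⟨z, hz, φ, hφ, q, hq⟩ := hK U hU_open hU_ne
  obtain ⟨N, hN⟩ := (hA.eventually_abs_sub_le_of_tendsto hq (half_pos hε)).exists_forall_of_atTop
  have h₁ := hN N le_rfl (f (φ N)) (hfA _)
  have h₂ := hN (N + 1) N.le_succ (f (φ N)) (hfA _)
  have h₃ := hsep (φ N) (φ (N + 1)) (hφ N.lt_succ_self) _ (hz _) _ (hz _)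
  rw [Real.dist_eq] at h₃
  simp only [Function.comp_apply] at h₁ h₂
  linarith [abs_sub_le (f (φ N) (z (φ N))) (f (φ N) q) (f (φ N) (z (φ (N + 1)))),
    abs_sub_comm (f (φ N) q) (f (φ N) (z (φ (N + 1))))]

lemma ContinuousMap.isCompact_closure_of_isBounded_of_equicontinuous [CompactSpace K]
    {A : Set C(K, ℝ)} (hb : Bornology.IsBounded A) (he : Equicontinuous ((↑) : A → K → ℝ)) :
    IsCompact (closure A) := by
  let e := ContinuousMap.isometryEquivBoundedOfCompact K ℝ
  obtain ⟨M, hM⟩ := isBounded_iff_forall_norm_le.1 hb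
  have he' : Equicontinuous ((↑) : e '' A → K → ℝ) := by
    have hrange : Set.range ((↑) : e '' A → K → ℝ) = Set.range ((↑) : A → K → ℝ) := by
      ext g
      simp only [e, Set.mem_range, Subtype.exists, isometryEquivBoundedOfCompact_apply,
        Set.mem_image, exists_prop, exists_exists_and_eq_and]
      rfl
    rwa [equicontinuous_iff_range, hrange, ← equicontinuous_iff_range]
  have := BoundedContinuousFunction.arzela_ascoli (Metric.closedBall 0 M) (isCompact_closedBall 0 M)
    (e '' A) (by
      rintro _ x ⟨f, hf, rfl⟩
      rw [Metric.mem_closedBall, dist_zero_right]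
      exact (f.norm_coe_le_norm x).trans (hM f hf)) he'
  rwa [← e.toHomeomorph.isCompact_preimage, Homeomorph.preimage_closure,
    IsometryEquiv.coe_toHomeomorph, e.injective.preimage_image] at this

end ContinuousMap

theorem stmt14_general {K : Type*} [TopologicalSpace K] [CompactSpace K]
    (hK : ∀ U : ℕ → Set K, (∀ n, IsOpen (U n)) → (∀ n, (U n).Nonempty) →
      ∃ x : ℕ → K, (∀ n, x n ∈ U n) ∧
        ∃ φ : ℕ → ℕ, StrictMono φ ∧ ∃ p : K, Tendsto (x ∘ φ) atTop (𝓝 p)) :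
    ∀ A : Set C(K, ℝ), LimitedSetB A → IsCompact (closure A) := fun _ hA =>
  ContinuousMap.isCompact_closure_of_isBounded_of_equicontinuous hA.isBounded
    (hA.equicontinuous hK)

/-- For every selectively sequentially pseudocompact compact Hausdorff space `K`, the Banach
space `C(K)` is Gelfand–Phillips: every limited subset is relatively norm compact. -/
theorem stmt14 {K : Type*} [TopologicalSpace K] [CompactSpace K] [T2Space K]
    (hK : ∀ U : ℕ → Set K, (∀ n, IsOpen (U n)) → (∀ n, (U n).Nonempty) →
      ∃ x : ℕ → K, (∀ n, x n ∈ U n) ∧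
        ∃ φ : ℕ → ℕ, StrictMono φ ∧ ∃ p : K, Tendsto (x ∘ φ) atTop (𝓝 p)) :
    ∀ A : Set C(K, ℝ), LimitedSetB A → IsCompact (closure A) :=
  stmt14_general hK
end

section
/- Let τ and 𝒯 be locally convex topologies on C(X) with 𝒯_p ⊆ τ ⊆ 𝒯 ⊆ 𝒯_k (between the pointwise and compact-open topologies), where X is Tychonoff. If (C(X), τ) is Gelfand–Phillips, then so is (C(X), 𝒯). In particular, if C_p(X) is Gelfand–Phillips then so is C_k(X). -/
open Filter Topology Pointwise

section Defs

variable {E : Type*} [AddCommGroup E] [Module ℝ E]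

/-- A barrel for the topology `t`: a `t`-closed, balanced, convex, absorbing set. -/
def IsBarrelT (t : TopologicalSpace E) (B : Set E) : Prop :=
  @IsClosed E t B ∧ Balanced ℝ B ∧ Convex ℝ B ∧ Absorbent ℝ B

/-- A weak* null sequence of `t`-continuous linear functionals. -/
def WeakStarNullT (t : TopologicalSpace E) (χ : ℕ → (E →ₗ[ℝ] ℝ)) : Prop :=
  (∀ n, @Continuous _ _ t _ (χ n)) ∧ ∀ x : E, Tendsto (fun n => χ n x) atTop (𝓝 0)

/-- A set is `t`-barrel-bounded if it is absorbed by every `t`-barrel. -/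
def BarrelBoundedT (t : TopologicalSpace E) (A : Set E) : Prop :=
  ∀ B : Set E, IsBarrelT t B → ∃ c : ℝ, A ⊆ c • B

/-- A set is `t`-limited if every weak* null sequence of `t`-continuous functionals converges
to `0` uniformly on it. -/
def LimitedT (t : TopologicalSpace E) (A : Set E) : Prop :=
  ∀ χ : ℕ → (E →ₗ[ℝ] ℝ), WeakStarNullT t χ →
    ∀ ε : ℝ, 0 < ε → ∀ᶠ n in atTop, ∀ a ∈ A, |χ n a| ≤ ε

/-- `t`-barrel-precompactness. -/
def BarrelPrecompactT (t : TopologicalSpace E) (A : Set E) : Prop :=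
  ∀ B : Set E, IsBarrelT t B → ∃ F : Set E, F.Finite ∧ A ⊆ F + B

/-- `(E, t)` is Gelfand–Phillips if every barrel-bounded limited set is barrel-precompact. -/
def GelfandPhillipsT (t : TopologicalSpace E) : Prop :=
  ∀ A : Set E, BarrelBoundedT t A → LimitedT t A → BarrelPrecompactT t A

end Defs

/-- The topology of pointwise convergence on `C(X, ℝ)`. -/
def TpTop (X : Type*) [TopologicalSpace X] : TopologicalSpace C(X, ℝ) :=
  TopologicalSpace.induced (fun f : C(X, ℝ) => (fun x => f x : X → ℝ)) Pi.topologicalSpace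

/-! A barrel `B` of `𝒯` is a barrel of the compact-open topology. Let `S` be the set of points
`x` such that every neighbourhood of `x` supports a function outside `B`. Pulling `B` back to the
Banach spaces `C_b(X)` and `ℓ^∞` (along `s ↦ ∑ sₙ gₙ` for locally finite families `(gₙ)`), where
barrels are neighbourhoods of zero by Baire's theorem, shows that `B` contains a uniform ball and
that `S` is functionally bounded. A partition of unity on each compact set then writes `f / 2`,
for `f` small on `S`, as a convex combination of elements of `B`, so `[S; ε] ⊆ closure B = B`.
Since `[S; ε]` is already a barrel of `𝒯_p`, a `𝒯`-limited `𝒯`-barrel-bounded set, which is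
`τ`-limited and `τ`-barrel-bounded, is covered by finitely many translates of `[S; ε] ⊆ B`. -/

open Set Function
open scoped BoundedContinuousFunction ENNReal lp

section BarrelsInTVS

variable {E : Type*} [AddCommGroup E] [Module ℝ E]

theorem IsBarrelT.mono {t t' : TopologicalSpace E} {B : Set E} (hB : IsBarrelT t' B)
    (h : t ≤ t') : IsBarrelT t B :=
  ⟨hB.1.mono h, hB.2⟩

theorem BarrelBoundedT.mono {t t' : TopologicalSpace E} {A : Set E} (hA : BarrelBoundedT t A)
    (h : t ≤ t') : BarrelBoundedT t' A :=
  fun B hB => hA B (hB.mono h)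

theorem LimitedT.mono {t t' : TopologicalSpace E} {A : Set E} (hA : LimitedT t A)
    (h : t ≤ t') : LimitedT t' A :=
  fun χ hχ => hA χ ⟨fun n => continuous_le_dom h (hχ.1 n), hχ.2⟩

theorem IsBarrelT.preimage {F : Type*} [AddCommGroup F] [Module ℝ F] [TopologicalSpace E]
    [TopologicalSpace F] {B : Set F} (hB : IsBarrelT ‹_› B) (L : E →L[ℝ] F) :
    IsBarrelT ‹_› (L ⁻¹' B) := by
  obtain ⟨hcl, hbal, hconv, habs⟩ := hB
  refine ⟨hcl.preimage L.continuous, hbal.mulActionHom_preimage L.toMulActionHom,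
    hconv.linear_preimage L.toLinearMap, absorbent_iff_eventually_nhdsNE_zero.2 fun x => ?_⟩
  filter_upwards [habs.eventually_nhdsNE_zero (L x)] with c hc
  simpa using hc

theorem Convex.sum_mem_of_card_smul_mem {ι : Type*} {s : Set E} (hs : Convex ℝ s)
    (h0 : (0 : E) ∈ s) {T : Finset ι} {v : ι → E} (hv : ∀ i ∈ T, (T.card : ℝ) • v i ∈ s) :
    ∑ i ∈ T, v i ∈ s := by
  rcases T.eq_empty_or_nonempty with rfl | hT
  · simpa using h0
  have hT0 : (T.card : ℝ) ≠ 0 := Nat.cast_ne_zero.2 hT.card_pos.ne'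
  convert hs.sum_mem (w := fun _ => (T.card : ℝ)⁻¹) (fun _ _ => by positivity)
    (by simp [hT0]) hv using 2 with i
  rw [smul_smul, inv_mul_cancel₀ hT0, one_smul]

theorem IsBarrelT.mem_nhds_zero [TopologicalSpace E] [IsTopologicalAddGroup E]
    [ContinuousSMul ℝ E] [BaireSpace E] {B : Set E} (hB : IsBarrelT ‹_› B) : B ∈ 𝓝 0 := by
  obtain ⟨hcl, hbal, hconv, habs⟩ := hB
  -- by Baire, some `(n + 1) • B` and hence `B` has an interior point `z`; then so has `-z`,
  -- and convexity makes their midpoint `0` interior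
  have hcover : ⋃ n : ℕ, ((n : ℝ) + 1) • B = univ := by
    refine eq_univ_of_forall fun x => mem_iUnion.2 ?_
    obtain ⟨r, hr⟩ := absorbs_iff_norm.1 (habs x)
    obtain ⟨n, hn⟩ := exists_nat_ge r
    refine ⟨n, hr _ ?_ rfl⟩
    rw [Real.norm_of_nonneg (by positivity)]
    linarith
  obtain ⟨n, z, hz⟩ := nonempty_interior_of_iUnion_of_closed
    (fun n : ℕ => hcl.smul_of_ne_zero (by positivity)) hcover
  rw [interior_smul₀ (by positivity), mem_smul_set] at hz
  obtain ⟨z, hz, -⟩ := hz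
  have hneg : -z ∈ B := hbal.neg_mem_iff.2 (interior_subset hz)
  have := hconv.combo_interior_self_mem_interior hz hneg (by norm_num : (0 : ℝ) < 1 / 2)
    (by norm_num : (0 : ℝ) ≤ 1 / 2) (by norm_num)
  rw [smul_neg, add_neg_cancel] at this
  exact mem_interior_iff_mem_nhds.1 this

end BarrelsInTVS

section ContinuousFunctions

variable {X ι : Type*} [TopologicalSpace X]

theorem ContinuousMap.mem_closure_of_forall_isCompact_exists_eqOn {Y : Type*} [UniformSpace Y]
    {B : Set C(X, Y)} {f : C(X, Y)} (h : ∀ K, IsCompact K → ∃ g ∈ B, EqOn g f K) :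
    f ∈ closure B := by
  rw [mem_closure_iff_nhds_basis
    (nhds_basis_uniformity' ContinuousMap.hasBasis_compactConvergenceUniformity)]
  rintro ⟨K, V⟩ ⟨hK, hV⟩
  obtain ⟨g, hgB, hgf⟩ := h K hK
  exact ⟨g, hgB, fun x hx => hgf hx ▸ refl_mem_uniformity hV⟩

theorem exists_bump_of_mem_nhds [CompletelyRegularSpace X] {x : X} {U : Set X} (hU : U ∈ 𝓝 x) :
    ∃ p : C(X, ℝ), p x = 1 ∧ (∀ y, p y ∈ Icc 0 1) ∧ support p ⊆ U := by
  obtain ⟨V, hVU, hVo, hxV⟩ := mem_nhds_iff.1 hU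
  obtain ⟨q, hq, hqx, hqV⟩ := CompletelyRegularSpace.completely_regular_isOpen x V hVo hxV
  refine ⟨⟨fun y => 1 - q y, by fun_prop⟩, by simp [hqx], fun y => ?_, ?_⟩
  · simp [unitInterval.nonneg, unitInterval.le_one]
  · refine (support_subset_iff'.2 fun y hy => ?_).trans hVU
    simp [hqV hy]

theorem IsCompact.exists_finset_sum_eq_one [CompletelyRegularSpace X] {K : Set X}
    (hK : IsCompact K) {U : X → Set X} (hU : ∀ x ∈ K, U x ∈ 𝓝 x) :
    ∃ (T : Finset X) (φ : X → C(X, ℝ)), (∀ x ∈ T, x ∈ K) ∧ (∀ x y, 0 ≤ φ x y) ∧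
      (∀ x, support (φ x) ⊆ U x) ∧ (∀ y, ∑ x ∈ T, φ x y ≤ 1) ∧
      ∀ y ∈ K, ∑ x ∈ T, φ x y = 1 := by
  have hbump : ∀ x, ∃ p : C(X, ℝ), (x ∈ K → p x = 1) ∧ (∀ y, p y ∈ Icc 0 1) ∧
      support p ⊆ U x := by
    intro x
    by_cases hx : x ∈ K
    · obtain ⟨p, hpx, hp⟩ := exists_bump_of_mem_nhds (hU x hx)
      exact ⟨p, fun _ => hpx, hp⟩
    · exact ⟨0, fun h => absurd h hx, fun _ => by simp, by simp⟩
  choose p hpK hp01 hpU using hbump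
  obtain ⟨T, hTK, hKT⟩ := hK.elim_nhds_subcover (fun x => {y | 1 / 2 < p x y}) fun x hx =>
    (isOpen_lt continuous_const (p x).continuous).mem_nhds (by norm_num [hpK x hx])
  set S : X → ℝ := fun y => ∑ x ∈ T, p x y
  have hSK : ∀ y ∈ K, 1 / 2 < S y := by
    intro y hy
    obtain ⟨x, hxT, hxy⟩ := mem_iUnion₂.1 (hKT hy)
    exact hxy.trans_le
      (Finset.single_le_sum (f := fun x => p x y) (fun x _ => (hp01 x y).1) hxT)
  set D : X → ℝ := fun y => max (S y) (1 / 2)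
  have hDpos : ∀ y, 0 < D y := fun y => lt_max_of_lt_right (by norm_num)
  have hDcont : Continuous D := by fun_prop
  refine ⟨T, fun x => ⟨fun y => p x y / D y, (p x).continuous.div hDcont fun y => (hDpos y).ne'⟩,
    hTK, fun x y => div_nonneg (hp01 x y).1 (hDpos y).le, fun x => ?_, fun y => ?_,
    fun y hy => ?_⟩
  · refine (support_subset_iff'.2 fun y hy => ?_).trans (hpU x)
    simp [notMem_support.1 hy]
  · simp only [ContinuousMap.coe_mk, ← Finset.sum_div]
    exact div_le_one_of_le₀ (le_max_left _ _) (hDpos y).le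
  · simp only [ContinuousMap.coe_mk, ← Finset.sum_div]
    rw [show D y = S y from max_eq_left (hSK y hy).le]
    exact div_self (by linarith [hSK y hy])

theorem locallyFinite_setOf_natCast_lt {h : X → ℝ} (hh : Continuous h) :
    LocallyFinite fun n : ℕ => {y | (n : ℝ) < h y} := by
  intro x
  refine ⟨{y | h y < h x + 1},
    (isOpen_lt hh continuous_const).mem_nhds (mem_ofPred.2 (lt_add_one _)),
    (finite_Iio ⌈h x + 1⌉₊).subset ?_⟩
  rintro n ⟨y, hny, hy⟩
  exact Nat.lt_ceil.2 (hny.trans hy)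

theorem LocallyFinite.hasFiniteSupport_mul_apply {g : ι → C(X, ℝ)}
    (hg : LocallyFinite fun i => support (g i)) (s : ι → ℝ) (x : X) :
    HasFiniteSupport fun i => s i * g i x :=
  (hg.point_finite x).subset fun _ hi => right_ne_zero_of_mul hi

noncomputable def ContinuousMap.finsumCLM (g : ι → C(X, ℝ))
    (hg : LocallyFinite fun i => support (g i)) : ℓ^∞(ι, ℝ) →L[ℝ] C(X, ℝ) where
  toFun := ContinuousMap.curry
    ⟨fun p : ℓ^∞(ι, ℝ) × X => ∑ᶠ i, p.1 i * g i p.2, continuous_finsum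
      (fun i => ((lp.evalCLM ℝ _ ∞ i).continuous.comp continuous_fst).mul
        ((g i).continuous.comp continuous_snd))
      ((hg.preimage_continuous continuous_snd).subset fun _ _ hp => right_ne_zero_of_mul hp)⟩
  map_add' s t := by
    ext x
    simp only [ContinuousMap.curry_apply, ContinuousMap.coe_mk, ContinuousMap.add_apply,
      lp.coeFn_add, Pi.add_apply, add_mul]
    exact finsum_add_distrib (hg.hasFiniteSupport_mul_apply _ x)
      (hg.hasFiniteSupport_mul_apply _ x)
  map_smul' c s := by
    ext x
    simp only [ContinuousMap.curry_apply, ContinuousMap.coe_mk, ContinuousMap.smul_apply,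
      lp.coeFn_smul, Pi.smul_apply, smul_eq_mul, RingHom.id_apply, mul_assoc]
    exact (mul_finsum _ c).symm
  cont := (ContinuousMap.curry _).continuous

theorem ContinuousMap.finsumCLM_apply (g : ι → C(X, ℝ))
    (hg : LocallyFinite fun i => support (g i)) (s : ℓ^∞(ι, ℝ)) (x : X) :
    finsumCLM g hg s x = ∑ᶠ i, s i * g i x :=
  rfl

theorem IsBarrelT.exists_smul_mem_of_locallyFinite {B : Set C(X, ℝ)}
    (hB : IsBarrelT ContinuousMap.compactOpen B) {g : ι → C(X, ℝ)}
    (hg : LocallyFinite fun i => support (g i)) : ∃ ε > (0 : ℝ), ∀ i, ε • g i ∈ B := by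
  classical
  obtain ⟨ρ, hρ, hball⟩ :=
    Metric.mem_nhds_iff.1 (hB.preimage (ContinuousMap.finsumCLM g hg)).mem_nhds_zero
  refine ⟨ρ / 2, half_pos hρ, fun i => ?_⟩
  have hsingle : ContinuousMap.finsumCLM g hg (lp.single ∞ i (ρ / 2)) = (ρ / 2) • g i := by
    ext x
    rw [ContinuousMap.finsumCLM_apply,
      finsum_eq_single _ i fun j hj => by rw [lp.single_apply_ne _ _ _ hj, zero_mul]]
    simp
  rw [← hsingle]
  refine hball (mem_ball_zero_iff.2 ?_)
  rw [lp.norm_single ENNReal.zero_lt_top, Real.norm_of_nonneg (half_pos hρ).le]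
  exact half_lt_self hρ

/-- The set `[A; ε]`. -/
def closedBallOn (A : Set X) (ε : ℝ) : Set C(X, ℝ) :=
  {f | ∀ x ∈ A, |f x| ≤ ε}

def FunctionallyBounded (A : Set X) : Prop :=
  ∀ f : C(X, ℝ), BddAbove ((fun x => |f x|) '' A)

theorem isBarrelT_closedBallOn {A : Set X} (hA : FunctionallyBounded A) {ε : ℝ} (hε : 0 < ε) :
    IsBarrelT (TpTop X) (closedBallOn A ε) := by
  refine ⟨?_, balanced_iff_smul_mem.2 fun a ha f hf x hx => ?_,
    fun f hf g hg a b ha hb hab x hx => ?_, absorbent_iff_eventually_nhdsNE_zero.2 fun f => ?_⟩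
  · refine isClosed_induced_iff.2 ⟨{g : X → ℝ | ∀ x ∈ A, |g x| ≤ ε}, ?_, rfl⟩
    simp only [ofPred_forall]
    exact isClosed_biInter fun x _ => isClosed_le (continuous_apply x).abs continuous_const
  · rw [ContinuousMap.smul_apply, smul_eq_mul, abs_mul]
    exact (mul_le_of_le_one_left (abs_nonneg _) ha).trans (hf x hx)
  · calc |(a • f + b • g) x| ≤ a * |f x| + b * |g x| := by
          simpa [abs_of_nonneg ha, abs_of_nonneg hb, abs_mul] using abs_add_le (a * f x) (b * g x)
      _ ≤ a * ε + b * ε := by gcongr <;> [exact hf x hx; exact hg x hx]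
      _ = ε := by rw [← add_mul, hab, one_mul]
  · obtain ⟨M, hM⟩ := hA f
    have hsmall : ∀ᶠ c : ℝ in 𝓝 0, |c| * M < ε :=
      ((continuous_abs.mul continuous_const).tendsto' 0 0 (by simp)).eventually (gt_mem_nhds hε)
    filter_upwards [nhdsWithin_le_nhds hsmall] with c hc x hx
    rw [ContinuousMap.smul_apply, smul_eq_mul, abs_mul]
    exact (mul_le_mul_of_nonneg_left (hM (mem_image_of_mem _ hx)) (abs_nonneg c)).trans hc.le

theorem IsBarrelT.exists_forall_abs_le_mem {B : Set C(X, ℝ)}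
    (hB : IsBarrelT ContinuousMap.compactOpen B) :
    ∃ r > 0, ∀ f : C(X, ℝ), (∀ x, |f x| ≤ r) → f ∈ B := by
  let j : (X →ᵇ ℝ) →L[ℝ] C(X, ℝ) :=
    ⟨BoundedContinuousFunction.toContinuousMapLinearMap X ℝ ℝ,
      ContinuousMap.continuous_of_continuous_uncurry _ continuous_eval⟩
  obtain ⟨ρ, hρ, hball⟩ := Metric.mem_nhds_iff.1 (hB.preimage j).mem_nhds_zero
  refine ⟨ρ / 2, half_pos hρ, fun f hf => ?_⟩
  let fb := BoundedContinuousFunction.ofNormedAddCommGroup f f.continuous (ρ / 2) hf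
  exact hball (mem_ball_zero_iff.2
    ((BoundedContinuousFunction.norm_ofNormedAddCommGroup_le _ (half_pos hρ).le _).trans_lt
      (half_lt_self hρ)) : fb ∈ _)

def barrelSupport (B : Set C(X, ℝ)) : Set X :=
  {x | ∀ U ∈ 𝓝 x, ∃ g : C(X, ℝ), support g ⊆ U ∧ g ∉ B}

theorem notMem_barrelSupport_iff {B : Set C(X, ℝ)} {x : X} :
    x ∉ barrelSupport B ↔ ∃ U ∈ 𝓝 x, ∀ g : C(X, ℝ), support g ⊆ U → g ∈ B := by
  simp [barrelSupport]

theorem IsBarrelT.functionallyBounded_barrelSupport {B : Set C(X, ℝ)}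
    (hB : IsBarrelT ContinuousMap.compactOpen B) : FunctionallyBounded (barrelSupport B) := by
  intro f
  by_contra hf
  have hunb : ∀ a : ℝ, ∃ x ∈ barrelSupport B, a < |f x| := by simpa [bddAbove_def] using hf
  have hg : ∀ n : ℕ, ∃ g : C(X, ℝ), support g ⊆ {y | (n : ℝ) < |f y|} ∧ g ∉ B := by
    intro n
    obtain ⟨x, hx, hnx⟩ := hunb n
    exact hx _ ((isOpen_lt continuous_const f.continuous.abs).mem_nhds hnx)
  choose g hgU hgB using hg
  -- `B` absorbs the locally finite family `n • g n` uniformly, so `g n ∈ B` once `1 ≤ ε * n`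
  obtain ⟨ε, hε, hεB⟩ := hB.exists_smul_mem_of_locallyFinite (g := fun n : ℕ => (n : ℝ) • g n)
    ((locallyFinite_setOf_natCast_lt f.continuous.abs).subset fun n =>
      (support_const_smul_subset _ _).trans (hgU n))
  obtain ⟨n, hn⟩ := exists_nat_ge ε⁻¹
  have hεn : 1 ≤ ε * n := by rwa [inv_le_iff_one_le_mul₀ hε, mul_comm] at hn
  refine hgB n ?_
  have := hB.2.1.smul_mem (a := (ε * n)⁻¹)
    (by rw [norm_inv, Real.norm_of_nonneg (by positivity)]; exact inv_le_one_of_one_le₀ hεn)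
    (hεB n)
  rwa [smul_smul, smul_smul, mul_assoc, inv_mul_cancel₀ (by positivity), one_smul] at this

theorem IsBarrelT.inv_two_smul_mem [CompletelyRegularSpace X] {B : Set C(X, ℝ)}
    (hB : IsBarrelT ContinuousMap.compactOpen B) {r : ℝ} (hr : 0 ≤ r)
    (hrB : ∀ g : C(X, ℝ), (∀ x, |g x| ≤ r) → g ∈ B) {f : C(X, ℝ)}
    (hf : ∀ x ∈ barrelSupport B, |f x| < r) : (2⁻¹ : ℝ) • f ∈ B := by
  obtain ⟨hBcl, -, hBconv, hBabs⟩ := hB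
  rw [← hBcl.closure_eq]
  refine ContinuousMap.mem_closure_of_forall_isCompact_exists_eqOn fun K hK => ?_
  have hgood : ∀ x ∈ K \ {y | |f y| < r}, ∃ U ∈ 𝓝 x, ∀ g : C(X, ℝ), support g ⊆ U → g ∈ B :=
    fun x hx => notMem_barrelSupport_iff.1 fun hxS => hx.2 (hf x hxS)
  choose! U hU hUB using hgood
  obtain ⟨T, φ, hTK, hφ0, hφU, hφ1, hφK⟩ :=
    (hK.diff (isOpen_lt f.continuous.abs continuous_const)).exists_finset_sum_eq_one hU
  -- on `K`, `f = c * (1 - ψ) + ∑ f * φ x` with the truncation `c` of `f` at level `r`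
  let ψ : C(X, ℝ) := ∑ x ∈ T, φ x
  let c : C(X, ℝ) := ⟨fun y => max (-r) (min r (f y)), by fun_prop⟩
  have hψ : ∀ y, ψ y = ∑ x ∈ T, φ x y := fun y => by simp [ψ]
  have h₁ : c * (1 - ψ) ∈ B := by
    refine hrB _ fun y => ?_
    have hc : |c y| ≤ r := abs_le.2 ⟨le_max_left _ _, max_le (by linarith) (min_le_left _ _)⟩
    have hψ0 : 0 ≤ 1 - ψ y := by linarith [hφ1 y, hψ y]
    have hψ1 : 1 - ψ y ≤ 1 := by linarith [hψ y, Finset.sum_nonneg fun x (_ : x ∈ T) => hφ0 x y]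
    simp only [ContinuousMap.mul_apply, ContinuousMap.sub_apply, ContinuousMap.one_apply, abs_mul,
      abs_of_nonneg hψ0]
    nlinarith [abs_nonneg (c y)]
  have h₂ : ∑ x ∈ T, f * φ x ∈ B := by
    refine hBconv.sum_mem_of_card_smul_mem hBabs.zero_mem fun x hx => hUB x (hTK x hx) _ ?_
    refine support_subset_iff'.2 fun y hy => ?_
    simp [notMem_support.1 fun h => hy (hφU x h)]
  refine ⟨(2⁻¹ : ℝ) • (c * (1 - ψ)) + (2⁻¹ : ℝ) • ∑ x ∈ T, f * φ x,
    hBconv h₁ h₂ (by norm_num) (by norm_num) (by norm_num), fun y hy => ?_⟩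
  have hcy : c y * (1 - ψ y) = f y * (1 - ψ y) := by
    by_cases hyr : |f y| < r
    · obtain ⟨hlo, hhi⟩ := abs_lt.1 hyr
      simp [c, max_eq_right hlo.le, min_eq_right hhi.le]
    · rw [hψ, hφK y ⟨hy, hyr⟩, sub_self, mul_zero, mul_zero]
  simp only [ContinuousMap.add_apply, ContinuousMap.smul_apply, ContinuousMap.mul_apply,
    ContinuousMap.sub_apply, ContinuousMap.one_apply, smul_eq_mul, hcy]
  simp only [ContinuousMap.sum_apply, ContinuousMap.mul_apply, ← Finset.mul_sum, ← hψ]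
  ring

theorem IsBarrelT.exists_closedBallOn_barrelSupport_subset [CompletelyRegularSpace X]
    {B : Set C(X, ℝ)} (hB : IsBarrelT ContinuousMap.compactOpen B) :
    ∃ ε > 0, closedBallOn (barrelSupport B) ε ⊆ B := by
  obtain ⟨r, hr, hrB⟩ := hB.exists_forall_abs_le_mem
  refine ⟨r / 4, by positivity, fun f hf => ?_⟩
  have := hB.inv_two_smul_mem hr.le hrB (f := (2 : ℝ) • f) fun x hx => by
    rw [ContinuousMap.smul_apply, smul_eq_mul, abs_mul, abs_two]
    linarith [hf x hx]
  rwa [smul_smul, inv_mul_cancel₀ two_ne_zero, one_smul] at this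

end ContinuousFunctions

theorem stmt15_general {X : Type*} [TopologicalSpace X] [T35Space X]
    (τ 𝒯 : TopologicalSpace C(X, ℝ))
    (h1 : τ ≤ TpTop X) (h2 : 𝒯 ≤ τ) (h3 : ContinuousMap.compactOpen ≤ 𝒯)
    (hGP : GelfandPhillipsT τ) :
    GelfandPhillipsT 𝒯 := by
  intro A hAbdd hAlim B hB
  have hBco := hB.mono h3
  obtain ⟨ε, hε, hεB⟩ := hBco.exists_closedBallOn_barrelSupport_subset
  obtain ⟨F, hF, hAF⟩ := hGP A (hAbdd.mono h2) (hAlim.mono h2) _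
    ((isBarrelT_closedBallOn hBco.functionallyBounded_barrelSupport hε).mono h1)
  exact ⟨F, hF, hAF.trans (add_subset_add_left hεB)⟩

/-- Let `τ` and `𝒯` be locally convex topologies on `C(X)` with
`𝒯_p ⊆ τ ⊆ 𝒯 ⊆ 𝒯_k` (pointwise to compact-open; note that in the order on
`TopologicalSpace`, smaller means finer).  If `(C(X), τ)` is Gelfand–Phillips, then so is
`(C(X), 𝒯)`. -/
theorem stmt15 {X : Type*} [TopologicalSpace X] [T35Space X]
    (τ 𝒯 : TopologicalSpace C(X, ℝ))
    (h1 : τ ≤ TpTop X) (h2 : 𝒯 ≤ τ) (h3 : ContinuousMap.compactOpen ≤ 𝒯)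
    (hτ1 : @IsTopologicalAddGroup C(X, ℝ) τ _) (hτ2 : @ContinuousSMul ℝ C(X, ℝ) _ _ τ)
    (hτ3 : @LocallyConvexSpace ℝ C(X, ℝ) _ _ _ _ τ)
    (h𝒯1 : @IsTopologicalAddGroup C(X, ℝ) 𝒯 _) (h𝒯2 : @ContinuousSMul ℝ C(X, ℝ) _ _ 𝒯)
    (h𝒯3 : @LocallyConvexSpace ℝ C(X, ℝ) _ _ _ _ 𝒯)
    (hGP : GelfandPhillipsT τ) :
    GelfandPhillipsT 𝒯 :=
  stmt15_general τ 𝒯 h1 h2 h3 hGP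
end
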